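/- Suppose polynomials T_{k,β} satisfy the equations of Table 1 (the Lawrence–Krammer relations for a simply-laced root system). If (α_k, β) = 1, then T_{k,β} = r^{ht(β)+1}(r² − 1). -/
import Mathlib


/-- The fundamental root `α_i`, written in coordinates with respect to the basis of
fundamental roots. -/
def esingle {n : ℕ} (i : Fin n) : Fin n → ℤ := Pi.single i 1

/-- A finite crystallographic simply-laced root system (type `A`, `D` or `E`),
given by the Gram matrix `C` of the fundamental roots `α_1, …, α_n` (all of squared
length 2):  `C i j = (α_i, α_j)`, which is `2` on the diagonal and `0` or `-1` off
the diagonal, and is positive definite.  Roots are coordinatized in the root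
lattice `ℤⁿ`; the inner product is `ip`, and the positive roots are exactly the
lattice vectors of squared length `2` with nonnegative coordinates. -/
structure ADE (n : ℕ) where
  C : Matrix (Fin n) (Fin n) ℤ
  symm : ∀ i j, C i j = C j i
  diag : ∀ i, C i i = 2
  offdiag : ∀ i j, i ≠ j → C i j = 0 ∨ C i j = -1
  posdef : ∀ v : Fin n → ℤ, v ≠ 0 → 0 < ∑ i, ∑ j, v i * C i j * v j

namespace ADE

variable {n : ℕ}

/-- The inner product `( , )` on the root lattice. -/
def ip (X : ADE n) (v w : Fin n → ℤ) : ℤ := ∑ i, ∑ j, v i * X.C i j * w j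

/-- The set `Φ⁺` of positive roots: the lattice vectors of squared length `2`
all of whose coordinates (with respect to the fundamental roots) are nonnegative. -/
def Pos (X : ADE n) : Set (Fin n → ℤ) :=
  {β | β ≠ 0 ∧ (∀ j, 0 ≤ β j) ∧ X.ip β β = 2}

/-- The height `ht(β)`: the sum of the coefficients of `β` with respect to the
fundamental roots. -/
def htZ (β : Fin n → ℤ) : ℤ := ∑ j, β j

end ADE

namespace ADE

variable {n : ℕ}

/-- The index type of the basis `{x_β : β ∈ Φ⁺}`. -/
abbrev PosIdx' (X : ADE n) := {β : Fin n → ℤ // β ∈ X.Pos}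

/-- The Lawrence–Krammer equations of Table 1 of Cohen–Wales for the coefficients
`T_{k,β}` (`β ∈ Φ⁺`), over a coefficient ring `A` with distinguished invertible
element `r` (with inverse `rinv`):
* `T_{k,α_l} = 0` for `k ≠ l`;
* `T_{k,α_k} = r⁴`;
* `T_{k,α_k+α_l} = r⁵ - r³` for adjacent `k, l`;
* `T_{k,β} = r T_{k,β-α_l}` if `(α_l,β) = 1` and `(α_k,α_l) = 0`;
* `T_{k,β} = T_{l,β-α_k-α_l} + (r - r⁻¹) T_{k,β-α_l}` if `(α_k,β) = 0`,
  `(α_l,β) = 1`, `(α_k,α_l) = -1`;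
* `T_{k,β} = r⁻¹ T_{l,β-α_l} + (r - r⁻¹) T_{k,β-α_l}` if `(α_k,β) = -1`,
  `(α_l,β) = 1`, `(α_k,α_l) = -1`;
* `T_{k,β} = r T_{l,β-α_k}` if `(α_k,β) = 1`, `(α_l,β) = 0`, `(α_k,α_l) = -1`. -/
def TableRels (X : ADE n) (A : Type) [CommRing A] (r rinv : A)
    (T : Fin n → ADE.PosIdx' X → A) : Prop :=
  (∀ (k l : Fin n), k ≠ l → ∀ b : ADE.PosIdx' X, b.1 = esingle l → T k b = 0) ∧
  (∀ (k : Fin n) (b : ADE.PosIdx' X), b.1 = esingle k → T k b = r ^ 4) ∧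
  (∀ (k l : Fin n) (b : ADE.PosIdx' X), X.ip (esingle k) (esingle l) = -1 →
      b.1 = esingle k + esingle l → T k b = r ^ 5 - r ^ 3) ∧
  (∀ (k l : Fin n) (b c : ADE.PosIdx' X), X.ip (esingle l) b.1 = 1 →
      X.ip (esingle k) (esingle l) = 0 → b.1 = c.1 + esingle l →
      T k b = r * T k c) ∧
  (∀ (k l : Fin n) (b c d : ADE.PosIdx' X), X.ip (esingle k) b.1 = 0 →
      X.ip (esingle l) b.1 = 1 → X.ip (esingle k) (esingle l) = -1 →
      b.1 = c.1 + esingle k + esingle l → b.1 = d.1 + esingle l →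
      T k b = T l c + (r - rinv) * T k d) ∧
  (∀ (k l : Fin n) (b c d : ADE.PosIdx' X), X.ip (esingle k) b.1 = -1 →
      X.ip (esingle l) b.1 = 1 → X.ip (esingle k) (esingle l) = -1 →
      b.1 = c.1 + esingle l → b.1 = d.1 + esingle l →
      T k b = rinv * T l c + (r - rinv) * T k d) ∧
  (∀ (k l : Fin n) (b c : ADE.PosIdx' X), X.ip (esingle k) b.1 = 1 →
      X.ip (esingle l) b.1 = 0 → X.ip (esingle k) (esingle l) = -1 →
      b.1 = c.1 + esingle k → T k b = r * T l c)

end ADE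

namespace ADE

variable {n : ℕ} (X : ADE n)

lemma ip_single_left (k : Fin n) (w : Fin n → ℤ) :
    X.ip (esingle k) w = ∑ j, X.C k j * w j := by
  unfold ip
  rw [Finset.sum_eq_single k]
  · simp [esingle]
  · intro i _ hik; simp [esingle, Pi.single_eq_of_ne hik]
  · simp

lemma ip_single_single (k l : Fin n) : X.ip (esingle k) (esingle l) = X.C k l := by
  rw [ip_single_left]
  rw [Finset.sum_eq_single l]
  · simp [esingle]
  · intro j _ hjl; simp [esingle, Pi.single_eq_of_ne hjl]
  · simp

lemma ip_sub_right (u v w : Fin n → ℤ) : X.ip u (v - w) = X.ip u v - X.ip u w := by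
  simp [ip, mul_sub, Finset.sum_sub_distrib]

lemma ip_add_right (u v w : Fin n → ℤ) : X.ip u (v + w) = X.ip u v + X.ip u w := by
  simp [ip, mul_add, Finset.sum_add_distrib]

lemma ip_sub_left (u v w : Fin n → ℤ) : X.ip (u - v) w = X.ip u w - X.ip v w := by
  simp [ip, sub_mul, Finset.sum_sub_distrib]

lemma ip_symm (v w : Fin n → ℤ) : X.ip v w = X.ip w v := by
  unfold ip
  rw [Finset.sum_comm]
  refine Finset.sum_congr rfl fun i _ => Finset.sum_congr rfl fun j _ => ?_
  rw [X.symm]; ring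

lemma ip_expand (β : Fin n → ℤ) (l : Fin n) :
    X.ip (β - esingle l) (β - esingle l)
      = X.ip β β - 2 * X.ip (esingle l) β + 2 := by
  rw [ip_sub_left, ip_sub_right, ip_sub_right, ip_single_single, X.diag,
    X.ip_symm β (esingle l)]
  ring

lemma eq_zero_of_ip_nonpos {v : Fin n → ℤ} (h : X.ip v v ≤ 0) : v = 0 := by
  by_contra hv
  have := X.posdef v hv
  rw [show (∑ i, ∑ j, v i * X.C i j * v j) = X.ip v v from rfl] at this
  omega

lemma ip_self_eq (β : Fin n → ℤ) :
    X.ip β β = ∑ i, β i * X.ip (esingle i) β := by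
  simp only [ip_single_left, Finset.mul_sum]
  unfold ip
  exact Finset.sum_congr rfl fun i _ => Finset.sum_congr rfl fun j _ => by ring

lemma coord_ge_one {β : Fin n → ℤ} (hb : β ∈ X.Pos) {l : Fin n}
    (h : X.ip (esingle l) β = 1) : 1 ≤ β l := by
  rw [ip_single_left] at h
  rw [← Finset.sum_erase_add _ _ (Finset.mem_univ l), X.diag] at h
  have hle : ∑ j ∈ Finset.univ.erase l, X.C l j * β j ≤ 0 := by
    apply Finset.sum_nonpos
    intro j hj
    rcases X.offdiag l j (Ne.symm (Finset.ne_of_mem_erase hj)) with h0 | h0 <;>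
      · rw [h0]; nlinarith [hb.2.1 j]
  omega

lemma step_mem {β : Fin n → ℤ} (hb : β ∈ X.Pos) {l : Fin n}
    (h : X.ip (esingle l) β = 1) : β - esingle l ∈ X.Pos := by
  refine ⟨?_, ?_, ?_⟩
  · intro h0
    have : β = esingle l := by rwa [sub_eq_zero] at h0
    rw [this, ip_single_single, X.diag] at h
    omega
  · intro j
    rcases eq_or_ne j l with rfl | hjl
    · have := X.coord_ge_one hb h
      simp only [Pi.sub_apply, esingle, Pi.single_eq_same]
      omega
    · simp only [Pi.sub_apply, esingle, Pi.single_eq_of_ne hjl]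
      have := hb.2.1 j
      omega
  · rw [ip_expand, hb.2.2, h]; ring

lemma eq_single_of_two {β : Fin n → ℤ} (hb : β ∈ X.Pos) {l : Fin n}
    (h : 2 ≤ X.ip (esingle l) β) : β = esingle l := by
  have h2 : X.ip (β - esingle l) (β - esingle l) ≤ 0 := by
    rw [ip_expand, hb.2.2]; omega
  have := X.eq_zero_of_ip_nonpos h2
  rwa [sub_eq_zero] at this

lemma exists_pos_pairing {β : Fin n → ℤ} (hb : β ∈ X.Pos) :
    ∃ l, 0 < β l ∧ 1 ≤ X.ip (esingle l) β := by
  by_contra hc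
  push_neg at hc
  have hle : ∑ i, β i * X.ip (esingle i) β ≤ 0 := by
    apply Finset.sum_nonpos
    intro i _
    rcases lt_or_ge 0 (β i) with hi | hi
    · have := hc i hi
      nlinarith
    · have : β i = 0 := le_antisymm hi (hb.2.1 i)
      simp [this]
  rw [← ip_self_eq, hb.2.2] at hle
  omega

lemma htZ_ge_one {β : Fin n → ℤ} (hb : β ∈ X.Pos) : 1 ≤ htZ β := by
  obtain ⟨j, hj⟩ := Function.ne_iff.mp hb.1
  have hj1 : 1 ≤ β j := by have := hb.2.1 j; simp only [Pi.zero_apply] at hj; omega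
  calc (1 : ℤ) ≤ β j := hj1
    _ ≤ ∑ i, β i := Finset.single_le_sum (fun i _ => hb.2.1 i) (Finset.mem_univ j)

lemma htZ_sub_single (β : Fin n → ℤ) (l : Fin n) :
    htZ (β - esingle l) = htZ β - 1 := by
  simp [htZ, Finset.sum_sub_distrib, esingle, Finset.sum_pi_single]

end ADE

open LaurentPolynomial in
/-- If the `T_{k,β} ∈ ℤ[r^{±1}]` satisfy the Lawrence–Krammer relations of Table 1
(together with `T_{k,β} = 0` whenever `k ∉ Supp β`), then whenever `(α_k, β) = 1`
we have `T_{k,β} = r^{ht(β)+1} (r² - 1)`. -/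
theorem table_pairing_one {n : ℕ} (X : ADE n)
    (Tf : Fin n → ADE.PosIdx' X → LaurentPolynomial ℤ)
    (hsupp : ∀ (k : Fin n) (b : ADE.PosIdx' X), b.1 k = 0 → Tf k b = 0)
    (htable : ADE.TableRels X (LaurentPolynomial ℤ) (T 1) (T (-1)) Tf) :
    ∀ (k : Fin n) (b : ADE.PosIdx' X), X.ip (esingle k) b.1 = 1 →
      Tf k b = T (ADE.htZ b.1 + 1) * (T 2 - 1) := by
  obtain ⟨h1, h2, h3, h4, h5, h6, h7⟩ := htable
  -- base case: β = α_k + α_l with (α_k, α_l) = -1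
  have base : ∀ (k l : Fin n) (b : ADE.PosIdx' X), X.C k l = -1 →
      b.1 = esingle k + esingle l → Tf k b = T (ADE.htZ b.1 + 1) * (T 2 - 1) := by
    intro k l b hC hb
    have hrel := h3 k l b (by rw [X.ip_single_single]; exact hC) hb
    have hht : ADE.htZ b.1 = 2 := by
      rw [hb]
      simp [ADE.htZ, esingle, Finset.sum_add_distrib, Finset.sum_pi_single]
    rw [hrel, hht, T_pow, T_pow, mul_sub, mul_one, ← T_add]
    norm_num
  suffices H : ∀ N : ℕ, ∀ (k : Fin n) (b : ADE.PosIdx' X),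
      X.ip (esingle k) b.1 = 1 → (ADE.htZ b.1).toNat = N →
      Tf k b = T (ADE.htZ b.1 + 1) * (T 2 - 1) by
    intro k b hk
    exact H _ k b hk rfl
  intro N
  induction N using Nat.strong_induction_on with
  | _ N IH =>
  intro k b hk hN
  have h1b := X.htZ_ge_one b.2
  by_cases hex : ∃ l, l ≠ k ∧ X.ip (esingle l) b.1 = 1
  · obtain ⟨l, hlk, hl1⟩ := hex
    have hδmem : b.1 - esingle l ∈ X.Pos := X.step_mem b.2 hl1
    have hhδ : ADE.htZ (b.1 - esingle l) = ADE.htZ b.1 - 1 := ADE.htZ_sub_single b.1 l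
    have h1δ := X.htZ_ge_one hδmem
    have hdecomp : b.1 = (⟨b.1 - esingle l, hδmem⟩ : ADE.PosIdx' X).1 + esingle l := by
      show b.1 = b.1 - esingle l + esingle l
      ring
    rcases X.offdiag k l hlk.symm with hC | hC
    · -- (α_k, α_l) = 0 : relation 4
      have hrel := h4 k l b ⟨b.1 - esingle l, hδmem⟩ hl1
        (by rw [X.ip_single_single]; exact hC) hdecomp
      have hkδ : X.ip (esingle k) (b.1 - esingle l) = 1 := by
        rw [X.ip_sub_right, hk, X.ip_single_single, hC]; ring
      have hih := IH (ADE.htZ (b.1 - esingle l)).toNat (by omega) k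
        ⟨b.1 - esingle l, hδmem⟩ hkδ rfl
      rw [hrel, hih]
      show T 1 * (T (ADE.htZ (b.1 - esingle l) + 1) * (T 2 - 1)) = _
      rw [← mul_assoc, ← T_add]
      have harg : (1 : ℤ) + (ADE.htZ (b.1 - esingle l) + 1) = ADE.htZ b.1 + 1 := by omega
      rw [harg]
    · -- (α_k, α_l) = -1 : forced base case
      have hkδ : X.ip (esingle k) (b.1 - esingle l) = 2 := by
        rw [X.ip_sub_right, hk, X.ip_single_single, hC]; ring
      have hδk : b.1 - esingle l = esingle k := X.eq_single_of_two hδmem (le_of_eq hkδ.symm)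
      have hb1 : b.1 = esingle k + esingle l := by
        rw [← hδk]; ring
      exact base k l b hC hb1
  · push_neg at hex
    have hγmem : b.1 - esingle k ∈ X.Pos := X.step_mem b.2 hk
    have hhγ : ADE.htZ (b.1 - esingle k) = ADE.htZ b.1 - 1 := ADE.htZ_sub_single b.1 k
    have h1γ := X.htZ_ge_one hγmem
    obtain ⟨l, hlpos, hl1⟩ := X.exists_pos_pairing hγmem
    rcases lt_or_ge (X.ip (esingle l) (b.1 - esingle k)) 2 with hlt | hge
    · have hl1' : X.ip (esingle l) (b.1 - esingle k) = 1 := by omega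
      have hlk : l ≠ k := by
        intro h
        subst h
        rw [X.ip_sub_right, hk, X.ip_single_single, X.diag] at hl1'
        omega
      have key : X.ip (esingle l) b.1 = 1 + X.C l k := by
        have h' := hl1'
        rw [X.ip_sub_right, X.ip_single_single] at h'
        omega
      have hC : X.C k l = -1 := by
        rcases X.offdiag k l (Ne.symm hlk) with h0 | h0
        · exfalso
          apply hex l hlk
          rw [key, ← X.symm, h0]; ring
        · exact h0
      have hl0 : X.ip (esingle l) b.1 = 0 := by
        rw [key, ← X.symm, hC]; ring
      have hdecomp : b.1 = (⟨b.1 - esingle k, hγmem⟩ : ADE.PosIdx' X).1 + esingle k := by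
        show b.1 = b.1 - esingle k + esingle k
        ring
      have hrel := h7 k l b ⟨b.1 - esingle k, hγmem⟩ hk hl0
        (by rw [X.ip_single_single]; exact hC) hdecomp
      have hih := IH (ADE.htZ (b.1 - esingle k)).toNat (by omega) l
        ⟨b.1 - esingle k, hγmem⟩ hl1' rfl
      rw [hrel, hih]
      show T 1 * (T (ADE.htZ (b.1 - esingle k) + 1) * (T 2 - 1)) = _
      rw [← mul_assoc, ← T_add]
      have harg : (1 : ℤ) + (ADE.htZ (b.1 - esingle k) + 1) = ADE.htZ b.1 + 1 := by omega
      rw [harg]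
    · have hγl : b.1 - esingle k = esingle l := X.eq_single_of_two hγmem hge
      have hb1 : b.1 = esingle k + esingle l := by
        rw [← hγl]; ring
      have hC : X.C k l = -1 := by
        have h' := hk
        rw [hb1, X.ip_add_right, X.ip_single_single, X.ip_single_single, X.diag] at h'
        omega
      exact base k l b hC hb1
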